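/- Counterexample to the many-sorted Łoś–Vaught test without splitness: Let Σ have sorts σ₁, σ₂ and one function symbol f : σ₁ → σ₂, and let T be the theory asserting that both sorts are infinite and that f is either injective or constant. Then T is κ-categorical for κ(σ₁) = ℵ₁, κ(σ₂) = ℵ₀, but T is not complete: the sentence ∀x,y:σ₁ (f(x)=f(y)) is neither provable nor refutable from T. -/

import Mathlib

/-! In a model with `|σ₀| = ℵ₁ > ℵ₀ = |σ₁|` the map `f` cannot be injective, so it is constant.
Two such models are isomorphic: take any bijections of the sorts and compose the one on `σ₁`
with the transposition exchanging the two constant values. Completeness fails because the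
structures with both sorts `ℕ` and `f` the identity, resp. a constant map, are both models of `T`,
and only the second one satisfies `∀ x y, f x = f y`. -/

set_option autoImplicit false

/-- A many-sorted first-order signature. -/
structure MSSignature : Type 1 where
  Sorts : Type
  Func : Type
  Pred : Type
  funcDom : Func → List Sorts
  funcCod : Func → Sorts
  predDom : Pred → List Sorts

namespace MS

variable (Sg : MSSignature)

/-- Many-sorted terms; variables of each sort are indexed by naturals. -/
inductive Term : Sg.Sorts → Type where
  | var (s : Sg.Sorts) (n : ℕ) : Term s
  | app (f : Sg.Func)
      (args : ∀ i : Fin (Sg.funcDom f).length, Term ((Sg.funcDom f).get i)) :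
      Term (Sg.funcCod f)

/-- Many-sorted first-order formulas. -/
inductive Formula : Type where
  | eq {s : Sg.Sorts} (t u : Term Sg s) : Formula
  | pred (P : Sg.Pred)
      (args : ∀ i : Fin (Sg.predDom P).length, Term Sg ((Sg.predDom P).get i)) : Formula
  | falsum : Formula
  | imp (φ ψ : Formula) : Formula
  | all (s : Sg.Sorts) (n : ℕ) (φ : Formula) : Formula

/-- A structure for a many-sorted signature: each sort gets a nonempty domain. -/
structure Structure : Type 1 where
  dom : Sg.Sorts → Type
  dom_nonempty : ∀ s, Nonempty (dom s)
  interpFunc : ∀ f : Sg.Func,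
    (∀ i : Fin (Sg.funcDom f).length, dom ((Sg.funcDom f).get i)) → dom (Sg.funcCod f)
  interpPred : ∀ P : Sg.Pred,
    (∀ i : Fin (Sg.predDom P).length, dom ((Sg.predDom P).get i)) → Prop

variable {Sg}

/-- Variable assignments. -/
def Assign (A : Structure Sg) : Type := ∀ s : Sg.Sorts, ℕ → A.dom s

open Classical in
noncomputable
def Assign.update {A : Structure Sg} (ν : Assign A) (s : Sg.Sorts) (n : ℕ) (a : A.dom s) :
    Assign A := fun t m =>
  if h : s = t then (if m = n then h ▸ a else ν t m) else ν t m

def Term.eval {A : Structure Sg} (ν : Assign A) : ∀ {s : Sg.Sorts}, Term Sg s → A.dom s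
  | _, .var s n => ν s n
  | _, .app f args => A.interpFunc f fun i => Term.eval ν (args i)

/-- Tarskian satisfaction. -/
def Sat (A : Structure Sg) (ν : Assign A) : Formula Sg → Prop
  | .eq t u => t.eval ν = u.eval ν
  | .pred P args => A.interpPred P fun i => (args i).eval ν
  | .falsum => False
  | .imp φ ψ => Sat A ν φ → Sat A ν ψ
  | .all s n φ => ∀ a : A.dom s, Sat A (ν.update s n a) φ

/-- Derived connectives. -/
def Formula.not (φ : Formula Sg) : Formula Sg := .imp φ .falsum
def Formula.and (φ ψ : Formula Sg) : Formula Sg := (Formula.imp φ ψ.not).not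
def Formula.or (φ ψ : Formula Sg) : Formula Sg := .imp φ.not ψ
def Formula.ex (s : Sg.Sorts) (n : ℕ) (φ : Formula Sg) : Formula Sg :=
  ((Formula.all s n φ.not)).not
def Formula.andList : List (Formula Sg) → Formula Sg :=
  List.foldr Formula.and (Formula.not .falsum)
def Formula.orList : List (Formula Sg) → Formula Sg :=
  List.foldr Formula.or .falsum

/-- Occurrence of variable `(s, n)` in a term. -/
def Term.varOccurs (s : Sg.Sorts) (n : ℕ) : ∀ {t : Sg.Sorts}, Term Sg t → Prop
  | _, .var s' n' => s = s' ∧ n = n'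
  | _, .app _ args => ∃ i, Term.varOccurs s n (args i)

/-- Free occurrence of variable `(s, n)` in a formula. -/
def Formula.varFree (s : Sg.Sorts) (n : ℕ) : Formula Sg → Prop
  | .eq t u => t.varOccurs s n ∨ u.varOccurs s n
  | .pred _ args => ∃ i, (args i).varOccurs s n
  | .falsum => False
  | .imp φ ψ => φ.varFree s n ∨ ψ.varFree s n
  | .all s' n' φ => φ.varFree s n ∧ ¬(s = s' ∧ n = n')

def Formula.IsSentence (φ : Formula Sg) : Prop := ∀ s n, ¬ φ.varFree s n

/-- Quantifier-free formulas. -/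
def Formula.IsQF : Formula Sg → Prop
  | .eq _ _ => True
  | .pred _ _ => True
  | .falsum => True
  | .imp φ ψ => φ.IsQF ∧ ψ.IsQF
  | .all _ _ _ => False

/-- A structure is a model of a set of formulas (a theory) if it satisfies
every axiom under every assignment. -/
def Models (A : Structure Sg) (T : Set (Formula Sg)) : Prop :=
  ∀ φ ∈ T, ∀ ν : Assign A, Sat A ν φ

/-- Elementary equivalence: same sentences hold. -/
def ElemEquiv (A B : Structure Sg) : Prop :=
  ∀ φ : Formula Sg, φ.IsSentence →
    ((∀ ν : Assign A, Sat A ν φ) ↔ (∀ ν : Assign B, Sat B ν φ))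

/-- Substructures: sort-wise subsets closed under the functions. -/
structure Substructure (A : Structure Sg) : Type 1 where
  carrier : ∀ s : Sg.Sorts, Set (A.dom s)
  carrier_nonempty : ∀ s, (carrier s).Nonempty
  closed : ∀ (f : Sg.Func)
    (args : ∀ i : Fin (Sg.funcDom f).length, A.dom ((Sg.funcDom f).get i)),
    (∀ i, args i ∈ carrier _) → A.interpFunc f args ∈ carrier _

/-- The induced structure on a substructure. -/
def Substructure.toStructure {A : Structure Sg} (B : Substructure A) : Structure Sg where
  dom s := ↥(B.carrier s)
  dom_nonempty s := ⟨⟨(B.carrier_nonempty s).choose, (B.carrier_nonempty s).choose_spec⟩⟩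
  interpFunc f args :=
    ⟨A.interpFunc f fun i => (args i).1, B.closed f _ fun i => (args i).2⟩
  interpPred P args := A.interpPred P fun i => (args i).1

/-- View an assignment into a substructure as an assignment into the ambient structure. -/
def Substructure.amb {A : Structure Sg} (B : Substructure A)
    (ν : Assign B.toStructure) : Assign A := fun s n => (ν s n).1

/-- `B` is an elementary substructure of `A`. -/
def Substructure.IsElementary {A : Structure Sg} (B : Substructure A) : Prop :=
  ∀ (φ : Formula Sg) (ν : Assign B.toStructure),
    Sat B.toStructure ν φ ↔ Sat A (B.amb ν) φ

/-- Isomorphisms of structures. -/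
structure Iso (A B : Structure Sg) : Type 1 where
  toEquiv : ∀ s, A.dom s ≃ B.dom s
  map_func : ∀ (f : Sg.Func) args,
    toEquiv _ (A.interpFunc f args) = B.interpFunc f (fun i => toEquiv _ (args i))
  map_pred : ∀ (P : Sg.Pred) args,
    A.interpPred P args ↔ B.interpPred P (fun i => toEquiv _ (args i))

end MS

/-- The cardinality of a signature: sorts + function symbols + predicate symbols. -/
noncomputable def MSSignature.card (Sg : MSSignature) : Cardinal :=
  Cardinal.mk Sg.Sorts + Cardinal.mk Sg.Func + Cardinal.mk Sg.Pred

/-- A countable signature. -/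
def MSSignature.IsCountable (Sg : MSSignature) : Prop :=
  Countable Sg.Sorts ∧ Countable Sg.Func ∧ Countable Sg.Pred

open MS Cardinal

namespace MS

/-- `T` is `κ`-categorical: there is exactly one model (up to isomorphism) whose
sort cardinalities are given by `κ`. -/
def Categorical {Sg : MSSignature} (T : Set (Formula Sg))
    (κ : Sg.Sorts → Cardinal) : Prop :=
  (∃ A : Structure Sg, Models A T ∧ ∀ s, #(A.dom s) = κ s) ∧
    ∀ A B : Structure Sg, Models A T → Models B T →
      (∀ s, #(A.dom s) = κ s) → (∀ s, #(B.dom s) = κ s) → Nonempty (Iso A B)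

end MS

/-- The signature with two sorts `0, 1`, a single unary function symbol
`f : σ₀ → σ₁`, and no predicate symbols. -/
def twoSortedFunSig : MSSignature where
  Sorts := Fin 2
  Func := Unit
  Pred := Empty
  funcDom := fun _ => [0]
  funcCod := fun _ => 1
  predDom := fun P => P.elim

namespace TwoSorted

open MS

/-- Application of the function symbol `f` to a term of sort `σ₀`. -/
def fapp (t : Term twoSortedFunSig (0 : Fin 2)) : Term twoSortedFunSig (1 : Fin 2) :=
  Term.app () (fun i => match i with | ⟨0, _⟩ => t)

/-- The conjunction of all `¬ (xᵢ = xⱼ)` for `i < j < n`, over variables of sort `s`. -/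
def distinctVars (s : Fin 2) (n : ℕ) : Formula twoSortedFunSig :=
  Formula.andList (((List.range n).flatMap fun j => (List.range j).map fun i => (i, j)).map
    fun p => (Formula.eq (Term.var s p.1) (Term.var (Sg := twoSortedFunSig) s p.2)).not)

/-- Existentially quantify the variables `0, …, n-1` of sort `s`. -/
def exBlock (s : Fin 2) : ℕ → Formula twoSortedFunSig → Formula twoSortedFunSig
  | 0, φ => φ
  | n + 1, φ => Formula.ex s n (exBlock s n φ)

/-- "There are at least `n` elements of sort `s`". -/
def atLeast (s : Fin 2) (n : ℕ) : Formula twoSortedFunSig :=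
  exBlock s n (distinctVars s n)

/-- "`f` is injective". -/
def injF : Formula twoSortedFunSig :=
  Formula.all (0 : Fin 2) 0 (Formula.all (0 : Fin 2) 1
    (Formula.imp (Formula.eq (fapp (Term.var (Sg := twoSortedFunSig) (0 : Fin 2) 0)) (fapp (Term.var (Sg := twoSortedFunSig) (0 : Fin 2) 1)))
      (Formula.eq (Term.var (0 : Fin 2) 0) (Term.var (Sg := twoSortedFunSig) (0 : Fin 2) 1))))

/-- "`f` is constant": `∀ x y : σ₀, f x = f y`. -/
def constF : Formula twoSortedFunSig :=
  Formula.all (0 : Fin 2) 0 (Formula.all (0 : Fin 2) 1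
    (Formula.eq (fapp (Term.var (Sg := twoSortedFunSig) (0 : Fin 2) 0)) (fapp (Term.var (Sg := twoSortedFunSig) (0 : Fin 2) 1))))

/-- The theory: both sorts are infinite and `f` is injective or constant. -/
def theoryT : Set (Formula twoSortedFunSig) :=
  {φ | ∃ n : ℕ, φ = atLeast 0 n} ∪ {φ | ∃ n : ℕ, φ = atLeast 1 n} ∪
    {Formula.or injF constF}

end TwoSorted

namespace MS

variable {Sg : MSSignature} {A : Structure Sg}

@[simp]
lemma Assign.update_self (ν : Assign A) (s : Sg.Sorts) (n : ℕ) (a : A.dom s) :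
    ν.update s n a s n = a := by
  simp [Assign.update]

lemma Assign.update_of_ne (ν : Assign A) {s t : Sg.Sorts} {n m : ℕ} (a : A.dom s)
    (h : ¬(s = t ∧ m = n)) : ν.update s n a t m = ν t m := by
  unfold Assign.update
  split_ifs with hs hm
  · exact absurd ⟨hs, hm⟩ h
  all_goals rfl

lemma Assign.update_update_of_ne (ν : Assign A) {s : Sg.Sorts} {n m : ℕ} (h : n ≠ m)
    (a b : A.dom s) : (ν.update s n a).update s m b s n = a := by
  rw [Assign.update_of_ne _ _ fun h' => h h'.2, Assign.update_self]

instance : Nonempty (Assign A) := ⟨fun s _ => (A.dom_nonempty s).some⟩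

lemma sat_not {ν : Assign A} {φ : Formula Sg} : Sat A ν φ.not ↔ ¬Sat A ν φ := Iff.rfl

lemma sat_and {ν : Assign A} {φ ψ : Formula Sg} :
    Sat A ν (φ.and ψ) ↔ Sat A ν φ ∧ Sat A ν ψ := by
  simp only [Formula.and, Formula.not, Sat]
  tauto

lemma sat_or {ν : Assign A} {φ ψ : Formula Sg} :
    Sat A ν (φ.or ψ) ↔ Sat A ν φ ∨ Sat A ν ψ := by
  simp only [Formula.or, Formula.not, Sat]
  tauto

lemma sat_ex {ν : Assign A} {s : Sg.Sorts} {n : ℕ} {φ : Formula Sg} :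
    Sat A ν (Formula.ex s n φ) ↔ ∃ a, Sat A (ν.update s n a) φ := by
  simp only [Formula.ex, Formula.not, Sat]
  exact not_forall_not

lemma sat_andList {ν : Assign A} {l : List (Formula Sg)} :
    Sat A ν (Formula.andList l) ↔ ∀ φ ∈ l, Sat A ν φ := by
  induction l with
  | nil => simp [Formula.andList, Formula.not, Sat]
  | cons φ l ih =>
    simp only [Formula.andList, List.foldr] at ih ⊢
    rw [sat_and, ih, List.forall_mem_cons]

end MS

namespace TwoSorted

open MS Cardinal

variable {A : Structure twoSortedFunSig}

/- The frozen definitions write sorts as `(0 : Fin 2)`, whose type is not reducibly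
`twoSortedFunSig.Sorts`; `rw` and `simp` fail on `A.dom 0` unless the sort is typed as below. -/
def σ₀ : twoSortedFunSig.Sorts := (0 : Fin 2)
def σ₁ : twoSortedFunSig.Sorts := (1 : Fin 2)

lemma sat_exBlock_of_sat {s : twoSortedFunSig.Sorts} {φ : Formula twoSortedFunSig} :
    ∀ {n : ℕ} {ν μ : Assign A},
      (∀ (t : twoSortedFunSig.Sorts) m, ¬(t = s ∧ m < n) → μ t m = ν t m) →
      Sat A μ φ → Sat A ν (exBlock s n φ)
  | 0, ν, μ, hμ, h => by
    have : μ = ν := funext fun t => funext fun m => hμ t m fun h => Nat.not_lt_zero m h.2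
    exact this ▸ h
  | n + 1, ν, μ, hμ, h => by
    refine sat_ex.mpr ⟨μ s n, sat_exBlock_of_sat (fun t m htm => ?_) h⟩
    by_cases hm : t = s ∧ m = n
    · obtain ⟨rfl, rfl⟩ := hm
      simp
    · rw [Assign.update_of_ne _ _ fun h => hm ⟨h.1.symm, h.2⟩]
      refine hμ t m fun ⟨hts, hlt⟩ => ?_
      rcases Nat.lt_succ_iff_lt_or_eq.mp hlt with hlt | rfl
      exacts [htm ⟨hts, hlt⟩, hm ⟨hts, rfl⟩]

lemma sat_distinctVars {s : Fin 2} {n : ℕ} {μ : Assign A} :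
    Sat A μ (distinctVars s n) ↔ ∀ i j, i < j → j < n → μ s i ≠ μ s j := by
  simp only [distinctVars, sat_andList, List.forall_mem_map, List.forall_mem_flatMap,
    List.mem_range, sat_not]
  exact ⟨fun h i j hij hjn => h j hjn i hij, fun h j hjn i hij => h i j hij hjn⟩

lemma sat_atLeast_of_embedding {s : Fin 2} {n : ℕ} (e : Fin n ↪ A.dom s) (ν : Assign A) :
    Sat A ν (atLeast s n) := by
  classical
  let μ : Assign A := fun t m => if h : s = t ∧ m < n then h.1 ▸ e ⟨m, h.2⟩ else ν t m
  have hμs : ∀ m (hm : m < n), μ s m = e ⟨m, hm⟩ := fun m hm => by simp [μ, hm]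
  refine sat_exBlock_of_sat (μ := μ) (fun t m htm => dif_neg fun h => htm ⟨h.1.symm, h.2⟩) ?_
  refine sat_distinctVars.mpr fun i j hij hjn => ?_
  rw [hμs i (hij.trans hjn), hμs j hjn, e.injective.ne_iff]
  exact Fin.ne_of_val_ne hij.ne

lemma sat_atLeast_of_infinite (s : Fin 2) [Infinite (A.dom s)] (n : ℕ) (ν : Assign A) :
    Sat A ν (atLeast s n) :=
  sat_atLeast_of_embedding (Fin.valEmbedding.trans (Infinite.natEmbedding _)) ν

def fInterp (A : Structure twoSortedFunSig) (a : A.dom σ₀) : A.dom σ₁ :=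
  A.interpFunc () fun | ⟨0, _⟩ => a

lemma interpFunc_eq_fInterp (f : twoSortedFunSig.Func)
    (args : ∀ i : Fin (twoSortedFunSig.funcDom f).length,
      A.dom ((twoSortedFunSig.funcDom f).get i)) :
    A.interpFunc f args = fInterp A (args ⟨0, Nat.one_pos⟩) := by
  show A.interpFunc () _ = A.interpFunc () _
  congr 1
  funext ⟨0, _⟩
  rfl

lemma eval_fapp (ν : Assign A) (t : Term twoSortedFunSig σ₀) :
    (fapp t).eval ν = fInterp A (t.eval ν) :=
  interpFunc_eq_fInterp () _

lemma sat_all_all_iff {ν : Assign A} {P : A.dom σ₀ → A.dom σ₀ → Prop}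
    {φ : Formula twoSortedFunSig}
    (hφ : ∀ a b, Sat A ((ν.update σ₀ 0 a).update σ₀ 1 b) φ ↔ P a b) :
    Sat A ν (.all σ₀ 0 (.all σ₀ 1 φ)) ↔ ∀ a b, P a b :=
  forall_congr' fun a => forall_congr' fun b => hφ a b

lemma sat_constF_iff (ν : Assign A) :
    Sat A ν constF ↔ ∀ a b : A.dom σ₀, fInterp A a = fInterp A b :=
  sat_all_all_iff fun a b => by
    show (fapp (.var σ₀ 0)).eval _ = (fapp (.var σ₀ 1)).eval _ ↔ _
    rw [eval_fapp, eval_fapp, Term.eval, Term.eval, Assign.update_update_of_ne _ zero_ne_one,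
      Assign.update_self]
    exact Iff.rfl

lemma sat_injF_iff (ν : Assign A) :
    Sat A ν injF ↔ Function.Injective (fInterp A) :=
  sat_all_all_iff fun a b => by
    show ((fapp (.var σ₀ 0)).eval _ = (fapp (.var σ₀ 1)).eval _ →
      (Term.var σ₀ 0).eval _ = (Term.var σ₀ 1).eval _) ↔ _
    rw [eval_fapp, eval_fapp, Term.eval, Term.eval, Assign.update_update_of_ne _ zero_ne_one,
      Assign.update_self]
    exact Iff.rfl

lemma models_theoryT [Infinite (A.dom σ₀)] [Infinite (A.dom σ₁)]
    (hf : Function.Injective (fInterp A) ∨ ∀ a b, fInterp A a = fInterp A b) :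
    Models A theoryT := by
  rintro φ ((⟨n, rfl⟩ | ⟨n, rfl⟩) | rfl) ν
  · exact sat_atLeast_of_infinite σ₀ n ν
  · exact sat_atLeast_of_infinite σ₁ n ν
  · rwa [sat_or, sat_injF_iff, sat_constF_iff]

lemma fInterp_const_of_mk_lt (hA : Models A theoryT) (hlt : #(A.dom σ₁) < #(A.dom σ₀))
    (a b : A.dom σ₀) : fInterp A a = fInterp A b := by
  obtain ⟨ν⟩ : Nonempty (Assign A) := inferInstance
  rcases sat_or.mp (hA _ (Or.inr rfl) ν) with hinj | hconst
  · exact absurd (mk_le_of_injective ((sat_injF_iff ν).mp hinj)) hlt.not_ge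
  · exact (sat_constF_iff ν).mp hconst a b

noncomputable def isoOfConst {B : Structure twoSortedFunSig}
    (hA : ∀ a b, fInterp A a = fInterp A b) (hB : ∀ a b, fInterp B a = fInterp B b)
    (e₀ : A.dom σ₀ ≃ B.dom σ₀) (e₁ : A.dom σ₁ ≃ B.dom σ₁) : Iso A B :=
  have x₀ : A.dom σ₀ := (A.dom_nonempty σ₀).some
  haveI := Classical.decEq (B.dom σ₁)
  let e₁' := e₁.trans (Equiv.swap (e₁ (fInterp A x₀)) (fInterp B (e₀ x₀)))
  have he : ∀ a, e₁' (fInterp A a) = fInterp B (e₀ a) := fun a => by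
    rw [hA a x₀, hB (e₀ a) (e₀ x₀)]
    simp [e₁']
  { toEquiv := fun | ⟨0, _⟩ => e₀ | ⟨1, _⟩ => e₁'
    map_func := fun f args => by
      show e₁' (A.interpFunc f args) = B.interpFunc f _
      rw [interpFunc_eq_fInterp, interpFunc_eq_fInterp (A := B)]
      exact he _
    map_pred := fun P => P.elim }

lemma nonempty_iso_of_mk_lt {B : Structure twoSortedFunSig} (hA : Models A theoryT)
    (hB : Models B theoryT) (hlt : #(A.dom σ₁) < #(A.dom σ₀))
    (h₀ : #(A.dom σ₀) = #(B.dom σ₀)) (h₁ : #(A.dom σ₁) = #(B.dom σ₁)) : Nonempty (Iso A B) :=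
  ⟨isoOfConst (fInterp_const_of_mk_lt hA hlt) (fInterp_const_of_mk_lt hB (h₀ ▸ h₁ ▸ hlt))
    (Cardinal.eq.mp h₀).some (Cardinal.eq.mp h₁).some⟩

def ofFun {D₀ D₁ : Type} [Nonempty D₀] [Nonempty D₁] (F : D₀ → D₁) :
    Structure twoSortedFunSig where
  dom := fun | ⟨0, _⟩ => D₀ | ⟨1, _⟩ => D₁
  dom_nonempty := fun | ⟨0, _⟩ => ‹_› | ⟨1, _⟩ => ‹_›
  interpFunc := fun _ args => F (args ⟨0, Nat.one_pos⟩)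
  interpPred := fun P => P.elim

lemma models_ofFun {D₀ D₁ : Type} [Infinite D₀] [Infinite D₁] (F : D₀ → D₁)
    (hF : Function.Injective F ∨ ∀ a b, F a = F b) : Models (ofFun F) theoryT :=
  have : Infinite ((ofFun F).dom σ₀) := ‹Infinite D₀›
  have : Infinite ((ofFun F).dom σ₁) := ‹Infinite D₁›
  models_theoryT hF

lemma sat_constF_ofFun_iff {D₀ D₁ : Type} [Nonempty D₀] [Nonempty D₁] (F : D₀ → D₁)
    (ν : Assign (ofFun F)) : Sat (ofFun F) ν constF ↔ ∀ a b, F a = F b :=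
  sat_constF_iff ν

lemma mk_dom_eq_iff :
    (∀ s, #(A.dom s) = (fun s : Fin 2 => if s = 0 then aleph 1 else ℵ₀) s) ↔
      #(A.dom σ₀) = aleph 1 ∧ #(A.dom σ₁) = ℵ₀ :=
  ⟨fun h => ⟨h σ₀, h σ₁⟩, fun ⟨h₀, h₁⟩ => fun | ⟨0, _⟩ => h₀ | ⟨1, _⟩ => h₁⟩

instance : Infinite (aleph 1).out :=
  infinite_iff.mpr ((mk_out _).symm ▸ aleph0_le_aleph 1)

end TwoSorted

open TwoSorted Cardinal in
/-- Counterexample to the many-sorted Łoś–Vaught test without splitness: the theory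
`T` (both sorts infinite, `f : σ₀ → σ₁` injective or constant) is `κ`-categorical
for `κ(σ₀) = ℵ₁`, `κ(σ₁) = ℵ₀`, yet the sentence `∀ x y : σ₀, f x = f y` is neither
entailed nor refuted by `T`, so `T` is not complete. -/
theorem los_vaught_fails_without_split :
    Categorical TwoSorted.theoryT
        (fun s : Fin 2 => if s = 0 then Cardinal.aleph 1 else Cardinal.aleph0) ∧
    ¬ (∀ A : MS.Structure twoSortedFunSig, MS.Models A TwoSorted.theoryT →
        ∀ ν : MS.Assign A, MS.Sat A ν TwoSorted.constF) ∧
    ¬ (∀ A : MS.Structure twoSortedFunSig, MS.Models A TwoSorted.theoryT →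
        ∀ ν : MS.Assign A, ¬ MS.Sat A ν TwoSorted.constF) := by
  have hconst : Models (ofFun fun _ : ℕ => (0 : ℕ)) theoryT :=
    models_ofFun _ (Or.inr fun _ _ => rfl)
  have hid : Models (ofFun (id : ℕ → ℕ)) theoryT := models_ofFun _ (Or.inl Function.injective_id)
  refine ⟨⟨?_, fun A B hA hB hκA hκB => ?_⟩, fun h => ?_, fun h => ?_⟩
  · refine ⟨ofFun fun _ : (aleph 1).out => (0 : ℕ), models_ofFun _ (Or.inr fun _ _ => rfl), ?_⟩
    exact mk_dom_eq_iff.mpr ⟨mk_out _, mk_nat⟩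
  · obtain ⟨hA₀, hA₁⟩ := mk_dom_eq_iff.mp hκA
    obtain ⟨hB₀, hB₁⟩ := mk_dom_eq_iff.mp hκB
    exact nonempty_iso_of_mk_lt hA hB (hA₁ ▸ hA₀ ▸ aleph0_lt_aleph_one)
      (hA₀.trans hB₀.symm) (hA₁.trans hB₁.symm)
  · exact zero_ne_one ((sat_constF_ofFun_iff _ _).mp (h _ hid (Classical.arbitrary _)) 0 1)
  · exact h _ hconst (Classical.arbitrary _) ((sat_constF_ofFun_iff _ _).mpr fun _ _ => rfl)
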